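/- For all real numbers A and B, the integral over the real line of φ(x)·Φ(A + Bx) dx equals Φ(A/√(1+B²)), where φ and Φ are the standard normal density and cumulative distribution function respectively. -/

import Mathlib

open MeasureTheory Set

noncomputable def stdPhi (x : ℝ) : ℝ := (Real.sqrt (2 * Real.pi))⁻¹ * Real.exp (-x ^ 2 / 2)

noncomputable def stdPhiCdf (x : ℝ) : ℝ := ∫ t in Set.Iio x, stdPhi t

lemma stdPhi_nonneg (x : ℝ) : 0 ≤ stdPhi x := by
  unfold stdPhi; positivity

lemma stdPhi_le (x : ℝ) : stdPhi x ≤ (Real.sqrt (2 * Real.pi))⁻¹ := by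
  unfold stdPhi
  have h1 : Real.exp (-x ^ 2 / 2) ≤ 1 := by
    rw [Real.exp_le_one_iff]; nlinarith [sq_nonneg x]
  have h2 : (0:ℝ) ≤ (Real.sqrt (2 * Real.pi))⁻¹ := by positivity
  nlinarith

@[fun_prop]
lemma stdPhi_continuous : Continuous stdPhi := by
  unfold stdPhi; fun_prop

lemma stdPhi_integrable : Integrable stdPhi := by
  have h : Integrable (fun x : ℝ => Real.exp (-(1/2 : ℝ) * x ^ 2)) :=
    integrable_exp_neg_mul_sq (by norm_num)
  have := h.const_mul (Real.sqrt (2 * Real.pi))⁻¹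
  refine this.congr (Filter.Eventually.of_forall fun x => ?_)
  unfold stdPhi; ring_nf

lemma stdPhi_integral : ∫ x : ℝ, stdPhi x = 1 := by
  unfold stdPhi
  rw [MeasureTheory.integral_const_mul]
  have h1 : ∫ x : ℝ, Real.exp (-x ^ 2 / 2) = ∫ x : ℝ, Real.exp (-(1/2 : ℝ) * x ^ 2) := by
    congr 1; ext x; ring_nf
  rw [h1, integral_gaussian]
  have h2 : Real.pi / (1/2 : ℝ) = 2 * Real.pi := by ring
  rw [h2]
  have h3 : Real.sqrt (2 * Real.pi) ≠ 0 := by positivity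
  field_simp

lemma stdPhi_affine_integrable (b : ℝ) {d : ℝ} (hd : d ≠ 0) :
    Integrable (fun x : ℝ => stdPhi (d * x + b)) :=
  (stdPhi_integrable.comp_add_right b).comp_mul_left' hd

lemma stdPhi_affine_integral (b : ℝ) {d : ℝ} (hd : 0 < d) :
    ∫ x : ℝ, stdPhi (d * x + b) = d⁻¹ := by
  have h1 := MeasureTheory.Measure.integral_comp_mul_left (fun y : ℝ => stdPhi (y + b)) d
  rw [h1, MeasureTheory.integral_add_right_eq_self stdPhi b, stdPhi_integral,
    abs_of_pos (inv_pos.mpr hd), smul_eq_mul, mul_one]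

theorem gaussian_int_cdf (A B : ℝ) :
    ∫ x : ℝ, stdPhi x * stdPhiCdf (A + B * x) = stdPhiCdf (A / Real.sqrt (1 + B ^ 2)) := by
  set c : ℝ := Real.sqrt (1 + B ^ 2) with hc_def
  have hc : 0 < c := Real.sqrt_pos.mpr (by positivity)
  have hc2 : c ^ 2 = 1 + B ^ 2 := Real.sq_sqrt (by positivity)
  set d : ℝ := A / c with hd_def
  -- key rotation identity
  have key : ∀ x u : ℝ,
      stdPhi x * (c * stdPhi (c * u + B * x)) = c * (stdPhi u * stdPhi (c * x + B * u)) := by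
    intro x u
    unfold stdPhi
    have e1 : (Real.sqrt (2*Real.pi))⁻¹ * Real.exp (-x^2/2) *
        (c * ((Real.sqrt (2*Real.pi))⁻¹ * Real.exp (-(c*u+B*x)^2/2))) =
        c * ((Real.sqrt (2*Real.pi))⁻¹ * (Real.sqrt (2*Real.pi))⁻¹ *
          Real.exp (-x^2/2 + -(c*u+B*x)^2/2)) := by
      rw [Real.exp_add]; ring
    have e2 : c * ((Real.sqrt (2*Real.pi))⁻¹ * Real.exp (-u^2/2) *
        ((Real.sqrt (2*Real.pi))⁻¹ * Real.exp (-(c*x+B*u)^2/2))) =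
        c * ((Real.sqrt (2*Real.pi))⁻¹ * (Real.sqrt (2*Real.pi))⁻¹ *
          Real.exp (-u^2/2 + -(c*x+B*u)^2/2)) := by
      rw [Real.exp_add]; ring
    rw [e1, e2]
    have hexp : -x^2/2 + -(c*u+B*x)^2/2 = -u^2/2 + -(c*x+B*u)^2/2 := by
      linear_combination ((x ^ 2 - u ^ 2) / 2) * hc2
    rw [hexp]
  -- expand the cdf via the affine substitution t = c*u + B*x
  have expand : ∀ x : ℝ,
      stdPhiCdf (A + B * x) = ∫ u in Iio d, c * stdPhi (c * u + B * x) := by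
    intro x
    have hpt : ∀ u : ℝ, (Iio d).indicator (fun u => c * stdPhi (c * u + B * x)) u
        = c * (Iio (A + B * x)).indicator stdPhi (c * u + B * x) := by
      intro u
      simp only [indicator_apply, mem_Iio]
      have hiff : u < d ↔ c * u + B * x < A + B * x := by
        rw [hd_def, lt_div_iff₀ hc]
        constructor <;> intro h <;> nlinarith
      rw [mul_ite, mul_zero]
      exact if_congr hiff rfl rfl
    have h1 := MeasureTheory.Measure.integral_comp_mul_left
      (fun y : ℝ => (Iio (A + B * x)).indicator stdPhi (y + B * x)) c
    calc stdPhiCdf (A + B * x)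
        = ∫ t, (Iio (A + B * x)).indicator stdPhi t := by
          rw [MeasureTheory.integral_indicator measurableSet_Iio]; rfl
      _ = c * (c⁻¹ * ∫ t, (Iio (A + B * x)).indicator stdPhi t) := by
          field_simp
      _ = c * (|c⁻¹| • ∫ y, (Iio (A + B * x)).indicator stdPhi (y + B * x)) := by
          rw [MeasureTheory.integral_add_right_eq_self, abs_of_pos (inv_pos.mpr hc),
            smul_eq_mul]
      _ = c * ∫ u, (Iio (A + B * x)).indicator stdPhi (c * u + B * x) := by rw [← h1]
      _ = ∫ u, c * (Iio (A + B * x)).indicator stdPhi (c * u + B * x) := by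
          rw [MeasureTheory.integral_const_mul]
      _ = ∫ u, (Iio d).indicator (fun u => c * stdPhi (c * u + B * x)) u := by
          simp_rw [hpt]
      _ = ∫ u in Iio d, c * stdPhi (c * u + B * x) := by
          rw [MeasureTheory.integral_indicator measurableSet_Iio]
  -- integrability for Fubini
  have hcont : Continuous (fun p : ℝ × ℝ => c * (stdPhi p.2 * stdPhi (c * p.1 + B * p.2))) := by
    fun_prop
  have hmeas : AEStronglyMeasurable
      (Function.uncurry fun x u => c * (stdPhi u * stdPhi (c * x + B * u)))
      (volume.prod (volume.restrict (Iio d))) := hcont.aestronglyMeasurable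
  have hInt : Integrable
      (Function.uncurry fun x u => c * (stdPhi u * stdPhi (c * x + B * u)))
      (volume.prod (volume.restrict (Iio d))) := by
    rw [MeasureTheory.integrable_prod_iff hmeas]
    constructor
    · refine Filter.Eventually.of_forall fun x => ?_
      have hb : Integrable (fun u : ℝ => c * ((Real.sqrt (2 * Real.pi))⁻¹ * stdPhi u))
          (volume.restrict (Iio d)) :=
        ((stdPhi_integrable.const_mul _).const_mul _).restrict
      refine hb.mono' ?_ (Filter.Eventually.of_forall fun u => ?_)
      · exact (Continuous.aestronglyMeasurable (by fun_prop)).restrict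
      · simp only [Function.uncurry_apply_pair]
        have hn1 := stdPhi_nonneg u
        have hn2 := stdPhi_nonneg (c * x + B * u)
        rw [Real.norm_of_nonneg (by positivity)]
        have h1 := stdPhi_le (c * x + B * u)
        have h2 := stdPhi_nonneg u
        have h4 : stdPhi u * stdPhi (c * x + B * u) ≤ stdPhi u * (Real.sqrt (2 * Real.pi))⁻¹ :=
          mul_le_mul_of_nonneg_left h1 h2
        have h5 := mul_le_mul_of_nonneg_left h4 hc.le
        calc c * (stdPhi u * stdPhi (c * x + B * u))
            ≤ c * (stdPhi u * (Real.sqrt (2 * Real.pi))⁻¹) := h5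
          _ = c * ((Real.sqrt (2 * Real.pi))⁻¹ * stdPhi u) := by ring
    · refine stdPhi_integrable.mono' hmeas.norm.integral_prod_right'
        (Filter.Eventually.of_forall fun x => ?_)
      simp only [Function.uncurry_apply_pair]
      have hnn : ∀ u : ℝ, (0:ℝ) ≤ c * (stdPhi u * stdPhi (c * x + B * u)) := by
        intro u
        have := stdPhi_nonneg u; have := stdPhi_nonneg (c * x + B * u); positivity
      have hInt2 : Integrable (fun u : ℝ => stdPhi x * (c * stdPhi (c * u + B * x))) :=
        ((stdPhi_affine_integrable (B * x) hc.ne').const_mul c).const_mul (stdPhi x)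
      have step : ∫ u in Iio d, ‖c * (stdPhi u * stdPhi (c * x + B * u))‖
          ≤ stdPhi x := by
        calc ∫ u in Iio d, ‖c * (stdPhi u * stdPhi (c * x + B * u))‖
            = ∫ u in Iio d, stdPhi x * (c * stdPhi (c * u + B * x)) := by
              congr 1; ext u
              rw [Real.norm_of_nonneg (hnn u), ← key x u]
          _ ≤ ∫ u, stdPhi x * (c * stdPhi (c * u + B * x)) :=
              setIntegral_le_integral hInt2 (Filter.Eventually.of_forall fun u => by
                have := stdPhi_nonneg x; have := stdPhi_nonneg (c * u + B * x); positivity)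
          _ = stdPhi x * (c * ∫ u, stdPhi (c * u + B * x)) := by
              rw [MeasureTheory.integral_const_mul, MeasureTheory.integral_const_mul]
          _ = stdPhi x := by
              rw [stdPhi_affine_integral (B * x) hc]; field_simp
      rw [Real.norm_of_nonneg]
      · exact step
      · exact integral_nonneg fun u => norm_nonneg _
  -- main computation
  calc ∫ x : ℝ, stdPhi x * stdPhiCdf (A + B * x)
      = ∫ x : ℝ, ∫ u in Iio d, stdPhi x * (c * stdPhi (c * u + B * x)) := by
        congr 1; ext x
        rw [expand x, ← MeasureTheory.integral_const_mul]
    _ = ∫ x : ℝ, ∫ u in Iio d, c * (stdPhi u * stdPhi (c * x + B * u)) := by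
        simp_rw [key]
    _ = ∫ u in Iio d, ∫ x : ℝ, c * (stdPhi u * stdPhi (c * x + B * u)) :=
        MeasureTheory.integral_integral_swap hInt
    _ = ∫ u in Iio d, stdPhi u := by
        congr 1; ext u
        rw [MeasureTheory.integral_const_mul, MeasureTheory.integral_const_mul,
          stdPhi_affine_integral (B * u) hc]
        field_simp
    _ = stdPhiCdf d := rfl
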